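/- arXiv:2105.04550 — 3 statements merged into one kernel-verified Lean document; each statement's English description precedes it below -/
import Mathlib

section
/- If the initialization (W_0,B_0) of an H-layer linear GNN with squared loss has singular margin γ > 0 with respect to layer H and m_H ≥ m_x, then along any gradient flow trajectory started at (W_0,B_0) one has λ_T^{(H)} ≥ γ² for all T ∈ [0,∞). -/
open Matrix
open scoped Kronecker

noncomputable section

/-- Squared Frobenius norm of a real matrix. -/
def frobSq {α β : Type*} [Fintype α] [Fintype β] (M : Matrix α β ℝ) : ℝ :=
  ∑ i, ∑ j, (M i j) ^ 2

/-- Squared Euclidean norm of a vector. -/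
def vecNormSq {α : Type*} [Fintype α] (v : α → ℝ) : ℝ := ∑ i, (v i) ^ 2

/-- Quadratic form `vᵀ M v` (Mahalanobis-type square "norm" `‖v‖_M²`). -/
def quadForm {α : Type*} [Fintype α] (M : Matrix α α ℝ) (v : α → ℝ) : ℝ :=
  v ⬝ᵥ M.mulVec v

/-- Column-stacking vectorization of a matrix: `vecM M (j, i) = M i j`. -/
def vecM {α β : Type*} (M : Matrix α β ℝ) : β × α → ℝ := fun p => M p.2 p.1

/-- Smallest (real) eigenvalue of a square matrix, as infimum of its eigenvalue set. -/
def lambdaMin {α : Type*} [Fintype α] (A : Matrix α α ℝ) : ℝ :=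
  sInf {r : ℝ | ∃ v : α → ℝ, v ≠ 0 ∧ A.mulVec v = r • v}

/-- The `min(#rows, #cols)`-th largest singular value of a matrix. -/
def sigmaMin {α β : Type*} [Fintype α] [Fintype β] (M : Matrix α β ℝ) : ℝ :=
  if Fintype.card α ≤ Fintype.card β then Real.sqrt (lambdaMin (M * Mᵀ))
  else Real.sqrt (lambdaMin (Mᵀ * M))

/-- Entrywise partial-derivative matrix (gradient) of a scalar function of a matrix. -/
def entryDeriv {a b : ℕ} (L : Matrix (Fin a) (Fin b) ℝ → ℝ)
    (M : Matrix (Fin a) (Fin b) ℝ) : Matrix (Fin a) (Fin b) ℝ :=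
  Matrix.of fun i j => deriv (fun s : ℝ => L (M + s • Matrix.single i j 1)) 0

/-- `Bseg B a b = B (b-1) * ⋯ * B a` (in the paper's 1-based notation, with
`B l` here being the paper's `B_{(l+1)} : ℝ^{m_{l+1} × m_l}`, this is `B̄^{(a+1:b)}`,
the product of the layers `a+1, …, b`); `Bseg B a a = 1` and in particular
`Bseg B 0 l` is the paper's `B̄^{(1:l)}`. -/
def Bseg {m : ℕ → ℕ} (B : ∀ l : ℕ, Matrix (Fin (m (l + 1))) (Fin (m l)) ℝ) (a : ℕ) :
    (b : ℕ) → Matrix (Fin (m b)) (Fin (m a)) ℝ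
  | 0 => if h : a = 0 then by rw [h]; exact 1 else 0
  | b + 1 => if h : a = b + 1 then by rw [h]; exact 1 else B b * Bseg B a b


/-- Training loss of the `H`-layer linear GNN with squared loss. -/
def gnnLoss {n nb my : ℕ} {m : ℕ → ℕ} (H : ℕ)
    (X : Matrix (Fin (m 0)) (Fin n) ℝ) (S : Matrix (Fin n) (Fin n) ℝ)
    (ι : Fin nb → Fin n) (Y : Matrix (Fin my) (Fin nb) ℝ)
    (W : Matrix (Fin my) (Fin (m H)) ℝ)
    (B : ∀ l : ℕ, Matrix (Fin (m (l + 1))) (Fin (m l)) ℝ) : ℝ :=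
  frobSq (W * Bseg B 0 H * X * (S ^ H).submatrix id ι - Y)

/-! Gradient flow does not increase the loss, because along it `d/dt L = -‖∇L‖² ≤ 0`. Hence the
whole trajectory stays in the sublevel set of the initial loss, where the singular margin gives
`σ_min(B̄^{(1:H)}) ≥ γ`. Since `m_H ≥ m_x`, this singular value is `√λ_min(B̄ᵀB̄)`: when the
product is not square this is the definition of `sigmaMin`, and when it is square `B̄B̄ᵀ` and
`B̄ᵀB̄` have the same characteristic polynomial. -/

theorem Matrix.exists_mulVec_eq_smul_iff_isRoot_charpoly {n K : Type*} [Fintype n]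
    [DecidableEq n] [Field K] (A : Matrix n n K) (r : K) :
    (∃ v : n → K, v ≠ 0 ∧ A *ᵥ v = r • v) ↔ A.charpoly.IsRoot r := by
  rw [Polynomial.IsRoot.def, eval_charpoly, ← exists_mulVec_eq_zero_iff]
  refine exists_congr fun v => and_congr_right fun _ => ?_
  rw [sub_mulVec, sub_eq_zero, eq_comm, scalar_apply, diagonal_const_mulVec]

theorem lambdaMin_eq_sInf_isRoot_charpoly {α : Type*} [Fintype α] [DecidableEq α]
    (A : Matrix α α ℝ) : lambdaMin A = sInf {r | A.charpoly.IsRoot r} := by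
  simp only [lambdaMin, exists_mulVec_eq_smul_iff_isRoot_charpoly]

theorem lambdaMin_mul_comm_of_card_eq {α β : Type*} [Fintype α] [Fintype β]
    (A : Matrix α β ℝ) (B : Matrix β α ℝ) (h : Fintype.card α = Fintype.card β) :
    lambdaMin (A * B) = lambdaMin (B * A) := by
  classical
  have hchar := charpoly_mul_comm' A B
  rw [h, (Polynomial.isRegular_X_pow _).left.eq_iff] at hchar
  rw [lambdaMin_eq_sInf_isRoot_charpoly, lambdaMin_eq_sInf_isRoot_charpoly, hchar]

theorem sigmaMin_eq_sqrt_lambdaMin_transpose_mul_self {α β : Type*} [Fintype α] [Fintype β]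
    (M : Matrix α β ℝ) (h : Fintype.card β ≤ Fintype.card α) :
    sigmaMin M = √(lambdaMin (Mᵀ * M)) := by
  unfold sigmaMin
  split_ifs with h'
  · rw [lambdaMin_mul_comm_of_card_eq _ _ (le_antisymm h' h)]
  · rfl

theorem ContinuousLinearMap.apply_eq_sum_smul_apply_single {ι R M : Type*} [Fintype ι]
    [DecidableEq ι] [Semiring R] [TopologicalSpace R] [AddCommMonoid M] [TopologicalSpace M]
    [Module R M] (L : (ι → R) →L[R] M) (v : ι → R) :
    L v = ∑ k, v k • L (Pi.single k 1) := by
  conv_lhs => rw [← Finset.univ_sum_single v]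
  rw [map_sum]
  refine Finset.sum_congr rfl fun k _ => ?_
  rw [← map_smul, ← Pi.single_smul, smul_eq_mul, mul_one]

theorem antitoneOn_comp_of_hasDerivWithinAt_neg_lineDeriv {ι : Type*} [Fintype ι]
    [DecidableEq ι] {G : (ι → ℝ) → ℝ} (hG : Differentiable ℝ G) {Φ : ℝ → ι → ℝ} {D : Set ℝ}
    (hD : Convex ℝ D)
    (hΦ : ∀ t ∈ D, ∀ k, HasDerivWithinAt (fun s => Φ s k)
      (-lineDeriv ℝ G (Φ t) (Pi.single k 1)) D t) :
    AntitoneOn (fun t => G (Φ t)) D := by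
  have hderiv : ∀ t ∈ D, HasDerivWithinAt (fun s => G (Φ s))
      (-∑ k, lineDeriv ℝ G (Φ t) (Pi.single k 1) ^ 2) D t := by
    intro t ht
    refine ((hG (Φ t)).hasFDerivAt.comp_hasDerivWithinAt t
      (hasDerivWithinAt_pi.2 (hΦ t ht))).congr_deriv ?_
    rw [ContinuousLinearMap.apply_eq_sum_smul_apply_single, ← Finset.sum_neg_distrib]
    refine Finset.sum_congr rfl fun k _ => ?_
    rw [← (hG (Φ t)).lineDeriv_eq_fderiv, smul_eq_mul]
    ring
  exact antitoneOn_of_hasDerivWithinAt_nonpos hD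
    (fun t ht => (hderiv t ht).continuousWithinAt)
    (fun t ht => (hderiv t (interior_subset ht)).mono interior_subset)
    (fun t _ => neg_nonpos.2 (Finset.sum_nonneg fun k _ => sq_nonneg _))

theorem differentiable_mul_apply {E : Type*} [NormedAddCommGroup E] [NormedSpace ℝ E]
    {α β γ : Type*} [Fintype β] {f : E → Matrix α β ℝ} {g : E → Matrix β γ ℝ}
    (hf : ∀ i j, Differentiable ℝ fun p => f p i j) (hg : ∀ i j, Differentiable ℝ fun p => g p i j)
    (i : α) (j : γ) : Differentiable ℝ fun p => (f p * g p) i j := by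
  simp only [Matrix.mul_apply]
  exact Differentiable.fun_sum fun k _ => (hf i k).mul (hg k j)

theorem Bseg_zero_succ {m : ℕ → ℕ} (B : ∀ l : ℕ, Matrix (Fin (m (l + 1))) (Fin (m l)) ℝ)
    (b : ℕ) : Bseg B 0 (b + 1) = B b * Bseg B 0 b := by
  simp [Bseg]

theorem Bseg_zero_congr {m : ℕ → ℕ} {B B' : ∀ l : ℕ, Matrix (Fin (m (l + 1))) (Fin (m l)) ℝ} :
    ∀ {b : ℕ}, (∀ l < b, B l = B' l) → Bseg B 0 b = Bseg B' 0 b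
  | 0, _ => rfl
  | b + 1, h => by
    rw [Bseg_zero_succ, Bseg_zero_succ, h b b.lt_succ_self,
      Bseg_zero_congr fun l hl => h l (hl.trans b.lt_succ_self)]

theorem differentiable_Bseg_zero_apply {E : Type*} [NormedAddCommGroup E] [NormedSpace ℝ E]
    {m : ℕ → ℕ} {B : E → ∀ l : ℕ, Matrix (Fin (m (l + 1))) (Fin (m l)) ℝ}
    (hB : ∀ l i j, Differentiable ℝ fun p => B p l i j) :
    ∀ b i j, Differentiable ℝ fun p => Bseg (B p) 0 b i j
  | 0, _, _ => differentiable_const _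
  | b + 1, i, j => by
    simp only [Bseg_zero_succ]
    exact differentiable_mul_apply (hB b) (differentiable_Bseg_zero_apply hB b) i j

section GnnParams

variable {n nb my H : ℕ} {m : ℕ → ℕ}

theorem gnnLoss_congr (X : Matrix (Fin (m 0)) (Fin n) ℝ) (S : Matrix (Fin n) (Fin n) ℝ)
    (ι : Fin nb → Fin n) (Y : Matrix (Fin my) (Fin nb) ℝ) (W : Matrix (Fin my) (Fin (m H)) ℝ)
    {B B' : ∀ l : ℕ, Matrix (Fin (m (l + 1))) (Fin (m l)) ℝ} (h : ∀ l < H, B l = B' l) :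
    gnnLoss H X S ι Y W B = gnnLoss H X S ι Y W B' := by
  rw [gnnLoss, gnnLoss, Bseg_zero_congr h]

/- The trainable parameters as one coordinate vector: the entries of `W`, then those of the
layers `B l`, `l < H`, so that the gradient flow becomes a coordinatewise ODE on
`GnnParamIndex my H m → ℝ`. -/
variable (my H m) in
abbrev GnnParamIndex : Type :=
  (Fin my × Fin (m H)) ⊕ (Σ l : Fin H, Fin (m (l + 1)) × Fin (m l))

def packParams (W : Matrix (Fin my) (Fin (m H)) ℝ)
    (B : ∀ l : ℕ, Matrix (Fin (m (l + 1))) (Fin (m l)) ℝ) : GnnParamIndex my H m → ℝ :=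
  Sum.elim (fun ij => W ij.1 ij.2) fun x => B x.1 x.2.1 x.2.2

def unpackW (p : GnnParamIndex my H m → ℝ) : Matrix (Fin my) (Fin (m H)) ℝ :=
  Matrix.of fun i j => p (.inl (i, j))

/- Layers `l ≥ H` do not enter the loss; they are set to `0`. -/
def unpackB (p : GnnParamIndex my H m → ℝ) (l : ℕ) : Matrix (Fin (m (l + 1))) (Fin (m l)) ℝ :=
  if h : l < H then Matrix.of fun i j => p (.inr ⟨⟨l, h⟩, (i, j)⟩) else 0

def gnnLossOfParams (X : Matrix (Fin (m 0)) (Fin n) ℝ) (S : Matrix (Fin n) (Fin n) ℝ)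
    (ι : Fin nb → Fin n) (Y : Matrix (Fin my) (Fin nb) ℝ) (p : GnnParamIndex my H m → ℝ) : ℝ :=
  gnnLoss H X S ι Y (unpackW p) (unpackB p)

theorem packParams_add_single_W (W : Matrix (Fin my) (Fin (m H)) ℝ)
    (B : ∀ l : ℕ, Matrix (Fin (m (l + 1))) (Fin (m l)) ℝ) (i : Fin my) (j : Fin (m H)) (s : ℝ) :
    packParams (W + s • Matrix.single i j 1) B
      = packParams W B + s • Pi.single (.inl (i, j)) 1 := by
  ext (⟨i', j'⟩ | ⟨l', i', j'⟩) <;> simp [packParams, Matrix.single_apply, Pi.single_apply, eq_comm]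

theorem packParams_update_add_single (W : Matrix (Fin my) (Fin (m H)) ℝ)
    (B : ∀ l : ℕ, Matrix (Fin (m (l + 1))) (Fin (m l)) ℝ) (l : Fin H) (i : Fin (m (l + 1)))
    (j : Fin (m l)) (s : ℝ) :
    packParams W (Function.update B l (B l + s • Matrix.single i j 1))
      = packParams W B + s • Pi.single (.inr ⟨l, (i, j)⟩) 1 := by
  ext (⟨i', j'⟩ | ⟨l', i', j'⟩)
  · simp [packParams]
  · by_cases hl : l' = l
    · subst hl
      simp [packParams, Matrix.single_apply, Pi.single_apply, eq_comm, and_comm]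
    · have hl' : (l' : ℕ) ≠ l := Fin.val_ne_of_ne hl
      simp [packParams, Function.update_of_ne hl', hl]

variable (X : Matrix (Fin (m 0)) (Fin n) ℝ) (S : Matrix (Fin n) (Fin n) ℝ)
    (ι : Fin nb → Fin n) (Y : Matrix (Fin my) (Fin nb) ℝ)

theorem gnnLossOfParams_packParams (W : Matrix (Fin my) (Fin (m H)) ℝ)
    (B : ∀ l : ℕ, Matrix (Fin (m (l + 1))) (Fin (m l)) ℝ) :
    gnnLossOfParams X S ι Y (packParams W B) = gnnLoss H X S ι Y W B :=
  gnnLoss_congr X S ι Y W fun l hl => by simp [unpackB, hl, packParams]; rfl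

theorem differentiable_gnnLossOfParams :
    Differentiable ℝ (gnnLossOfParams (H := H) X S ι Y) := by
  have hW : ∀ i j, Differentiable ℝ fun p : GnnParamIndex my H m → ℝ => unpackW p i j :=
    fun i j => differentiable_apply _
  have hB : ∀ l i j, Differentiable ℝ fun p : GnnParamIndex my H m → ℝ => unpackB p l i j := by
    intro l i j
    by_cases hl : l < H
    · simpa [unpackB, hl] using differentiable_apply _
    · simp [unpackB, hl]
  have hconst : ∀ {α β : Type} (M : Matrix α β ℝ) i j,
      Differentiable ℝ fun _ : GnnParamIndex my H m → ℝ => M i j :=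
    fun _ _ _ => differentiable_const _
  unfold gnnLossOfParams gnnLoss frobSq
  refine Differentiable.fun_sum fun i _ => Differentiable.fun_sum fun j _ => ?_
  exact ((differentiable_mul_apply (differentiable_mul_apply (differentiable_mul_apply hW
    (differentiable_Bseg_zero_apply hB H)) (hconst X)) (hconst _) i j).sub_const _).pow 2

theorem lineDeriv_gnnLossOfParams_inl (W : Matrix (Fin my) (Fin (m H)) ℝ)
    (B : ∀ l : ℕ, Matrix (Fin (m (l + 1))) (Fin (m l)) ℝ) (i : Fin my) (j : Fin (m H)) :
    lineDeriv ℝ (gnnLossOfParams X S ι Y) (packParams W B) (Pi.single (.inl (i, j)) 1)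
      = entryDeriv (fun W' => gnnLoss H X S ι Y W' B) W i j := by
  simp only [lineDeriv, entryDeriv, Matrix.of_apply, ← packParams_add_single_W,
    gnnLossOfParams_packParams]

theorem lineDeriv_gnnLossOfParams_inr (W : Matrix (Fin my) (Fin (m H)) ℝ)
    (B : ∀ l : ℕ, Matrix (Fin (m (l + 1))) (Fin (m l)) ℝ) (l : Fin H) (i : Fin (m (l + 1)))
    (j : Fin (m l)) :
    lineDeriv ℝ (gnnLossOfParams X S ι Y) (packParams W B) (Pi.single (.inr ⟨l, (i, j)⟩) 1)
      = entryDeriv (fun M => gnnLoss H X S ι Y W (Function.update B l M)) (B l) i j := by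
  simp only [lineDeriv, entryDeriv, Matrix.of_apply, ← packParams_update_add_single,
    gnnLossOfParams_packParams]

theorem antitoneOn_gnnLoss_of_gradient_flow {Wt : ℝ → Matrix (Fin my) (Fin (m H)) ℝ}
    {Bt : ℝ → ∀ l : ℕ, Matrix (Fin (m (l + 1))) (Fin (m l)) ℝ} {D : Set ℝ} (hD : Convex ℝ D)
    (hW : ∀ t ∈ D, ∀ i j,
      HasDerivWithinAt (fun s => Wt s i j)
        (-(entryDeriv (fun W' => gnnLoss H X S ι Y W' (Bt t)) (Wt t)) i j) D t)
    (hB : ∀ t ∈ D, ∀ l < H, ∀ i j,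
      HasDerivWithinAt (fun s => Bt s l i j)
        (-(entryDeriv
            (fun M : Matrix (Fin (m (l + 1))) (Fin (m l)) ℝ =>
              gnnLoss H X S ι Y (Wt t) (Function.update (Bt t) l M)) (Bt t l)) i j) D t) :
    AntitoneOn (fun t => gnnLoss H X S ι Y (Wt t) (Bt t)) D := by
  have hflow := antitoneOn_comp_of_hasDerivWithinAt_neg_lineDeriv
    (differentiable_gnnLossOfParams X S ι Y) (Φ := fun t => packParams (Wt t) (Bt t)) hD ?_
  · simpa only [gnnLossOfParams_packParams] using hflow
  rintro t ht (⟨i, j⟩ | ⟨l, i, j⟩)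
  · rw [lineDeriv_gnnLossOfParams_inl]
    exact hW t ht i j
  · rw [lineDeriv_gnnLossOfParams_inr]
    exact hB t ht l l.isLt i j

end GnnParams

theorem stmt1_general {n nb my H : ℕ} {m : ℕ → ℕ}
    (X : Matrix (Fin (m 0)) (Fin n) ℝ) (S : Matrix (Fin n) (Fin n) ℝ)
    (ι : Fin nb → Fin n)
    (Y : Matrix (Fin my) (Fin nb) ℝ)
    (Wt : ℝ → Matrix (Fin my) (Fin (m H)) ℝ)
    (Bt : ℝ → ∀ l : ℕ, Matrix (Fin (m (l + 1))) (Fin (m l)) ℝ)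
    (hW : ∀ t ∈ Set.Ici (0 : ℝ), ∀ i j,
      HasDerivWithinAt (fun s => Wt s i j)
        (-(entryDeriv (fun W' => gnnLoss H X S ι Y W' (Bt t)) (Wt t)) i j) (Set.Ici 0) t)
    (hB : ∀ t ∈ Set.Ici (0 : ℝ), ∀ l < H, ∀ i j,
      HasDerivWithinAt (fun s => Bt s l i j)
        (-(entryDeriv
            (fun M : Matrix (Fin (m (l + 1))) (Fin (m l)) ℝ =>
              gnnLoss H X S ι Y (Wt t) (Function.update (Bt t) l M)) (Bt t l)) i j)
        (Set.Ici 0) t)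
    -- the initialization `(W_0, B_0) = (Wt 0, Bt 0)` has singular margin `γ > 0`
    -- with respect to layer `H`
    (γ : ℝ) (hγ : 0 < γ)
    (hmargin : ∀ (W : Matrix (Fin my) (Fin (m H)) ℝ)
      (B : ∀ l : ℕ, Matrix (Fin (m (l + 1))) (Fin (m l)) ℝ),
      gnnLoss H X S ι Y W B ≤ gnnLoss H X S ι Y (Wt 0) (Bt 0) →
      γ ≤ sigmaMin (Bseg B 0 H))
    -- `m_H ≥ m_x`
    (hdim : m 0 ≤ m H) :
    ∀ T ∈ Set.Ici (0 : ℝ),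
      γ ^ 2 ≤ sInf {r : ℝ | ∃ t ∈ Set.Icc (0 : ℝ) T,
        r = lambdaMin ((Bseg (Bt t) 0 H)ᵀ * Bseg (Bt t) 0 H)} := by
  intro T hT
  have hloss := antitoneOn_gnnLoss_of_gradient_flow X S ι Y (convex_Ici 0) hW hB
  refine le_csInf ⟨_, 0, ⟨le_rfl, hT⟩, rfl⟩ ?_
  rintro _ ⟨t, ⟨ht, -⟩, rfl⟩
  have hσ := hmargin (Wt t) (Bt t) (hloss Set.self_mem_Ici ht ht)
  rw [sigmaMin_eq_sqrt_lambdaMin_transpose_mul_self _ (by simpa using hdim)] at hσ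
  exact (Real.le_sqrt' hγ).1 hσ

/-- Proposition 2 of the paper: singular margin `γ > 0` at initialization
with respect to layer `H`, together with `m_H ≥ m_x`, implies `λ_T^{(H)} ≥ γ²` for all `T ≥ 0`
along any gradient flow trajectory. -/
theorem stmt1 {n nb my H : ℕ} {m : ℕ → ℕ}
    (X : Matrix (Fin (m 0)) (Fin n) ℝ) (S : Matrix (Fin n) (Fin n) ℝ)
    (ι : Fin nb → Fin n) (hι : Function.Injective ι)
    (Y : Matrix (Fin my) (Fin nb) ℝ)
    (Wt : ℝ → Matrix (Fin my) (Fin (m H)) ℝ)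
    (Bt : ℝ → ∀ l : ℕ, Matrix (Fin (m (l + 1))) (Fin (m l)) ℝ)
    (hW : ∀ t ∈ Set.Ici (0 : ℝ), ∀ i j,
      HasDerivWithinAt (fun s => Wt s i j)
        (-(entryDeriv (fun W' => gnnLoss H X S ι Y W' (Bt t)) (Wt t)) i j) (Set.Ici 0) t)
    (hB : ∀ t ∈ Set.Ici (0 : ℝ), ∀ l < H, ∀ i j,
      HasDerivWithinAt (fun s => Bt s l i j)
        (-(entryDeriv
            (fun M : Matrix (Fin (m (l + 1))) (Fin (m l)) ℝ =>
              gnnLoss H X S ι Y (Wt t) (Function.update (Bt t) l M)) (Bt t l)) i j)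
        (Set.Ici 0) t)
    -- the initialization `(W_0, B_0) = (Wt 0, Bt 0)` has singular margin `γ > 0`
    -- with respect to layer `H`
    (γ : ℝ) (hγ : 0 < γ)
    (hmargin : ∀ (W : Matrix (Fin my) (Fin (m H)) ℝ)
      (B : ∀ l : ℕ, Matrix (Fin (m (l + 1))) (Fin (m l)) ℝ),
      gnnLoss H X S ι Y W B ≤ gnnLoss H X S ι Y (Wt 0) (Bt 0) →
      γ ≤ sigmaMin (Bseg B 0 H))
    -- `m_H ≥ m_x`
    (hdim : m 0 ≤ m H) :
    ∀ T ∈ Set.Ici (0 : ℝ),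
      γ ^ 2 ≤ sInf {r : ℝ | ∃ t ∈ Set.Icc (0 : ℝ) T,
        r = lambdaMin ((Bseg (Bt t) 0 H)ᵀ * Bseg (Bt t) 0 H)} :=
  stmt1_general X S ι Y Wt Bt hW hB γ hγ hmargin hdim

end
end

section
/- Let G ∈ ℝ^{m_x×n̄} and Y ∈ ℝ^{m_y×n̄}, and suppose m_l ≥ m_x for every l ∈ {1,…,H}. Then inf over W ∈ ℝ^{m_y×m_H} and B_{(l)} ∈ ℝ^{m_l×m_{l−1}} (l = 1,…,H, m_0 = m_x) of ‖W B_{(H)}⋯B_{(1)} G − Y‖_F² equals min over Z ∈ ℝ^{m_y×m_x} of ‖Z G − Y‖_F², which equals ‖(I − P) vec(Y)‖₂², where P is the orthogonal projection onto the column space of Gᵀ ⊗ I_{m_y}. -/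
open Matrix
open scoped Kronecker

noncomputable section

/-!
The end-to-end matrix `W B_{(H)} ⋯ B_{(1)}` of the deep model can be any `Z`: since every width
is at least `m_x`, the layers can be chosen as coordinate embeddings, which have left inverses.
So the deep and shallow problems have the same set of values. Vectorizing turns the shallow
problem into the least-squares problem `min_w ‖K w − vec Y‖²` with `K = Gᵀ ⊗ I`, and writing
`K w − y = (K w − P y) − (1 − P) y` splits the residual into a vector of `range P = range K`
and one orthogonal to it, so Pythagoras gives the lower bound `‖(1 − P) y‖²`, attained at any
`w` with `K w = P y`.
-/

def natDiag (R : Type*) [Zero R] [One R] (a b : ℕ) : Matrix (Fin a) (Fin b) R :=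
  of fun i j => if (i : ℕ) = j then 1 else 0

section CoordinateEmbedding

variable {R : Type*} [Semiring R]

theorem natDiag_self (a : ℕ) : natDiag R a a = 1 := by
  ext i j
  simp [natDiag, one_apply, Fin.ext_iff]

theorem natDiag_transpose_mul_self {a b : ℕ} (h : b ≤ a) :
    (natDiag R a b)ᵀ * natDiag R a b = 1 := by
  ext j j'
  simp only [mul_apply, transpose_apply, natDiag, of_apply, one_apply]
  rw [Finset.sum_eq_single (Fin.castLE h j)]
  · simp [Fin.ext_iff]
  · intro i _ hi
    have : (i : ℕ) ≠ j := fun hc => hi (Fin.ext hc)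
    simp [this]
  · simp

end CoordinateEmbedding

def embeddingLayers (m : ℕ → ℕ) (l : ℕ) : Matrix (Fin (m (l + 1))) (Fin (m l)) ℝ :=
  natDiag ℝ (m (l + 1)) (m 0) * (natDiag ℝ (m l) (m 0))ᵀ

theorem le_of_forall_hidden_le {H : ℕ} {m : ℕ → ℕ} (hdim : ∀ l, 1 ≤ l → l ≤ H → m 0 ≤ m l)
    {b : ℕ} (hb : b ≤ H) : m 0 ≤ m b := by
  rcases Nat.eq_zero_or_pos b with rfl | hpos
  · exact le_rfl
  · exact hdim b hpos hb

theorem Bseg_embeddingLayers {H : ℕ} {m : ℕ → ℕ} (hdim : ∀ l, 1 ≤ l → l ≤ H → m 0 ≤ m l) :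
    ∀ b ≤ H, Bseg (embeddingLayers m) 0 b = natDiag ℝ (m b) (m 0)
  | 0, _ => by rw [natDiag_self]; rfl
  | b + 1, hb => by
    rw [Bseg, dif_neg (by omega), embeddingLayers, Bseg_embeddingLayers hdim b (by omega),
      Matrix.mul_assoc, natDiag_transpose_mul_self (le_of_forall_hidden_le hdim (by omega)),
      Matrix.mul_one]

theorem exists_mul_Bseg_eq {k H : ℕ} {m : ℕ → ℕ} (hdim : ∀ l, 1 ≤ l → l ≤ H → m 0 ≤ m l)
    (Z : Matrix (Fin k) (Fin (m 0)) ℝ) :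
    ∃ (W : Matrix (Fin k) (Fin (m H)) ℝ) (B : ∀ l : ℕ, Matrix (Fin (m (l + 1))) (Fin (m l)) ℝ),
      W * Bseg B 0 H = Z := by
  refine ⟨Z * (natDiag ℝ (m H) (m 0))ᵀ, embeddingLayers m, ?_⟩
  rw [Bseg_embeddingLayers hdim H le_rfl, Matrix.mul_assoc,
    natDiag_transpose_mul_self (le_of_forall_hidden_le hdim le_rfl), Matrix.mul_one]

section Vectorization

variable {α β γ : Type*} [Fintype α]

theorem frobSq_eq_vecNormSq_vecM [Fintype β] (M : Matrix α β ℝ) : frobSq M = vecNormSq (vecM M) := by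
  rw [frobSq, vecNormSq, Fintype.sum_prod_type]
  exact Finset.sum_comm

variable [Fintype γ] [DecidableEq γ]

theorem vecM_mul_eq_kronecker_mulVec (Z : Matrix γ α ℝ) (G : Matrix α β ℝ) :
    vecM (Z * G) = (Gᵀ ⊗ₖ (1 : Matrix γ γ ℝ)) *ᵥ vecM Z := by
  funext ⟨j, i⟩
  simp only [vecM, mul_apply, mulVec, dotProduct, Fintype.sum_prod_type, kroneckerMap_apply,
    one_apply, transpose_apply, mul_ite, ite_mul, mul_one, mul_zero, zero_mul,
    Finset.sum_ite_eq, Finset.mem_univ, if_true]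
  exact Finset.sum_congr rfl fun k _ => mul_comm _ _

theorem setOf_frobSq_mul_sub_eq_range [Fintype β] (G : Matrix α β ℝ) (Y : Matrix γ β ℝ) :
    {r : ℝ | ∃ Z : Matrix γ α ℝ, frobSq (Z * G - Y) = r} =
      Set.range fun w => vecNormSq ((Gᵀ ⊗ₖ (1 : Matrix γ γ ℝ)) *ᵥ w - vecM Y) := by
  have hval (Z : Matrix γ α ℝ) : frobSq (Z * G - Y) =
      vecNormSq ((Gᵀ ⊗ₖ (1 : Matrix γ γ ℝ)) *ᵥ vecM Z - vecM Y) := by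
    rw [frobSq_eq_vecNormSq_vecM, ← vecM_mul_eq_kronecker_mulVec]
    rfl
  ext r
  constructor
  · rintro ⟨Z, rfl⟩
    exact ⟨vecM Z, (hval Z).symm⟩
  · rintro ⟨w, rfl⟩
    exact ⟨of fun i k => w (k, i), hval _⟩

end Vectorization

section LeastSquares

variable {α β : Type*} [Fintype α]

theorem vecNormSq_nonneg (v : α → ℝ) : 0 ≤ vecNormSq v :=
  Finset.sum_nonneg fun i _ => sq_nonneg (v i)

theorem vecNormSq_neg (v : α → ℝ) : vecNormSq (-v) = vecNormSq v := by
  simp [vecNormSq]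

theorem vecNormSq_sub_of_dotProduct_eq_zero {q v : α → ℝ} (h : q ⬝ᵥ v = 0) :
    vecNormSq (q - v) = vecNormSq q + vecNormSq v := by
  have hsq (u : α → ℝ) : vecNormSq u = u ⬝ᵥ u := by simp [vecNormSq, dotProduct, sq]
  rw [hsq, hsq, hsq, sub_dotProduct, dotProduct_sub, dotProduct_sub, h, dotProduct_comm v q, h]
  ring

variable [DecidableEq α] {P : Matrix α α ℝ}

theorem dotProduct_one_sub_mulVec_eq_zero (hPsymm : Pᵀ = P) (hPidem : P * P = P)
    {q : α → ℝ} (hq : P *ᵥ q = q) (y : α → ℝ) : q ⬝ᵥ (1 - P) *ᵥ y = 0 := by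
  have hannih : P * (1 - P) = 0 := by rw [Matrix.mul_sub, Matrix.mul_one, hPidem, sub_self]
  rw [← hq, ← vecMul_transpose, ← dotProduct_mulVec, hPsymm, mulVec_mulVec, hannih,
    zero_mulVec, dotProduct_zero]

theorem isLeast_range_vecNormSq_mulVec_sub [Fintype β] {K : Matrix α β ℝ} (hPsymm : Pᵀ = P)
    (hPidem : P * P = P) (hPrange : ∀ v, ∃ w, P *ᵥ v = K *ᵥ w)
    (hPfix : ∀ w, P *ᵥ (K *ᵥ w) = K *ᵥ w) (y : α → ℝ) :
    IsLeast (Set.range fun w => vecNormSq (K *ᵥ w - y)) (vecNormSq ((1 - P) *ᵥ y)) := by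
  have hresid : (1 - P) *ᵥ y = y - P *ᵥ y := by rw [sub_mulVec, one_mulVec]
  constructor
  · obtain ⟨w, hw⟩ := hPrange y
    refine ⟨w, ?_⟩
    dsimp only
    rw [← hw, hresid, ← neg_sub, vecNormSq_neg]
  · rintro r ⟨w, rfl⟩
    have hsplit : K *ᵥ w - y = (K *ᵥ w - P *ᵥ y) - (1 - P) *ᵥ y := by
      rw [hresid, sub_sub_sub_cancel_right]
    have hfix : P *ᵥ (K *ᵥ w - P *ᵥ y) = K *ᵥ w - P *ᵥ y := by
      rw [mulVec_sub, hPfix, mulVec_mulVec, hPidem]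
    dsimp only
    rw [hsplit, vecNormSq_sub_of_dotProduct_eq_zero
      (dotProduct_one_sub_mulVec_eq_zero hPsymm hPidem hfix y)]
    exact le_add_of_nonneg_left (vecNormSq_nonneg _)

end LeastSquares

/-- identification of the global minimum value of the deep linear model.
When all hidden widths satisfy `m_l ≥ m_x`, the infimum over `(W,B)` of
`‖W B_{(H)}⋯B_{(1)} G − Y‖_F²` equals the minimum over `Z` of `‖Z G − Y‖_F²`, which
equals `‖(I − P) vec(Y)‖₂²` for `P` the orthogonal projection onto the column space of
`Gᵀ ⊗ I_{m_y}`. -/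
theorem stmt13 {nb my H : ℕ} {m : ℕ → ℕ}
    (G : Matrix (Fin (m 0)) (Fin nb) ℝ)
    (Y : Matrix (Fin my) (Fin nb) ℝ)
    (hdim : ∀ l, 1 ≤ l → l ≤ H → m 0 ≤ m l)
    (P : Matrix (Fin nb × Fin my) (Fin nb × Fin my) ℝ)
    -- `P` is the orthogonal projection onto the column space of `K = Gᵀ ⊗ I_{m_y}`:
    (hPsymm : Pᵀ = P)
    (hPidem : P * P = P)
    (hPrange : ∀ v : Fin nb × Fin my → ℝ, ∃ w : Fin (m 0) × Fin my → ℝ,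
      P.mulVec v = (Gᵀ ⊗ₖ (1 : Matrix (Fin my) (Fin my) ℝ)).mulVec w)
    (hPfix : ∀ w : Fin (m 0) × Fin my → ℝ,
      P.mulVec ((Gᵀ ⊗ₖ (1 : Matrix (Fin my) (Fin my) ℝ)).mulVec w) =
        (Gᵀ ⊗ₖ (1 : Matrix (Fin my) (Fin my) ℝ)).mulVec w) :
    -- the deep and shallow problems have the same optimal value, ...
    sInf {r : ℝ | ∃ (W : Matrix (Fin my) (Fin (m H)) ℝ)
        (B : ∀ l : ℕ, Matrix (Fin (m (l + 1))) (Fin (m l)) ℝ),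
        frobSq (W * Bseg B 0 H * G - Y) = r} =
      sInf {r : ℝ | ∃ Z : Matrix (Fin my) (Fin (m 0)) ℝ, frobSq (Z * G - Y) = r} ∧
    -- ... and the shallow minimum is attained, with value `‖(I − P) vec(Y)‖₂²`
    IsLeast {r : ℝ | ∃ Z : Matrix (Fin my) (Fin (m 0)) ℝ, frobSq (Z * G - Y) = r}
      (vecNormSq ((1 - P).mulVec (vecM Y))) := by
  have hvalues : {r : ℝ | ∃ (W : Matrix (Fin my) (Fin (m H)) ℝ)
        (B : ∀ l : ℕ, Matrix (Fin (m (l + 1))) (Fin (m l)) ℝ),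
        frobSq (W * Bseg B 0 H * G - Y) = r} =
      {r : ℝ | ∃ Z : Matrix (Fin my) (Fin (m 0)) ℝ, frobSq (Z * G - Y) = r} := by
    ext r
    constructor
    · rintro ⟨W, B, rfl⟩
      exact ⟨W * Bseg B 0 H, rfl⟩
    · rintro ⟨Z, rfl⟩
      obtain ⟨W, B, hWB⟩ := exists_mul_Bseg_eq hdim Z
      exact ⟨W, B, by rw [hWB]⟩
  refine ⟨by rw [hvalues], ?_⟩
  rw [setOf_frobSq_mul_sub_eq_range]
  exact isLeast_range_vecNormSq_mulVec_sub hPsymm hPidem hPrange hPfix _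
end
end

section
/- For an H-layer linear GNN with squared loss, along any gradient flow trajectory (W_t,B_t), the end-to-end matrix Z_{(H),t} := W_t B_{(H),t}⋯B_{(1),t} ∈ ℝ^{m_y×m_x} satisfies the induced dynamics d/dt vec(Z_{(H),t}) = −( F_{(H),t} + Σ_{i=1}^H J_{(i,H),t}ᵀ J_{(i,H),t} ) · vec(∇_{(H)}L(W_t,B_t)), where ∇_{(H)}L(W,B) = (∂L/∂Ŷ)(X(S^H)_{*I})ᵀ with Ŷ = Z_{(H)} X(S^H)_{*I} and ∂L/∂Ŷ = 2(Ŷ − Y). -/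
open Matrix
open scoped Kronecker

noncomputable section

/-! Writing `P = B̄^{(1:H)}` and `G = ∇_{(H)}L`, the chain rule gives `∂L/∂W = G Pᵀ` and
`∂L/∂B_{(l)} = (W B̄^{(l+1:H)})ᵀ G (B̄^{(1:l-1)})ᵀ`. Differentiating `Z = W P` by the product rule
and substituting the gradient flow yields
`Ż = -G PᵀP - Σ_l (W B̄^{(l+1:H)})(W B̄^{(l+1:H)})ᵀ G (B̄^{(1:l-1)})ᵀ B̄^{(1:l-1)}`,
and `vec (A G C) = (Cᵀ ⊗ A) vec G` turns each term into the corresponding Kronecker factor. -/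

section Bseg

variable {m : ℕ → ℕ} {B : ∀ l : ℕ, Matrix (Fin (m (l + 1))) (Fin (m l)) ℝ}

@[simp]
lemma Bseg_self (a : ℕ) : Bseg B a a = 1 := by
  cases a <;> simp [Bseg]

lemma Bseg_succ {a b : ℕ} (hab : a ≤ b) : Bseg B a (b + 1) = B b * Bseg B a b := by
  rw [Bseg, dif_neg (by omega)]

lemma Bseg_mul_Bseg {a b c : ℕ} (hab : a ≤ b) (hbc : b ≤ c) :
    Bseg B b c * Bseg B a b = Bseg B a c := by
  induction c, hbc using Nat.le_induction with
  | base => rw [Bseg_self, Matrix.one_mul]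
  | succ c hbc ih =>
    rw [Bseg_succ hbc, Bseg_succ (hab.trans hbc), Matrix.mul_assoc, ih]

lemma Bseg_congr {B' : ∀ l : ℕ, Matrix (Fin (m (l + 1))) (Fin (m l)) ℝ} {a b : ℕ} (hab : a ≤ b)
    (h : ∀ c, a ≤ c → c < b → B c = B' c) : Bseg B a b = Bseg B' a b := by
  induction b, hab using Nat.le_induction with
  | base => simp
  | succ b hab ih =>
    rw [Bseg_succ hab, Bseg_succ hab, h b hab (by omega),
      ih fun c hac hcb => h c hac (by omega)]

lemma Bseg_update {a l b : ℕ} (hal : a ≤ l) (hlb : l < b)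
    (M : Matrix (Fin (m (l + 1))) (Fin (m l)) ℝ) :
    Bseg (Function.update B l M) a b = Bseg B (l + 1) b * M * Bseg B a l := by
  have outer : Bseg (Function.update B l M) (l + 1) b = Bseg B (l + 1) b :=
    Bseg_congr hlb fun c hc _ => by rw [Function.update_of_ne (by omega)]
  have inner : Bseg (Function.update B l M) a l = Bseg B a l :=
    Bseg_congr hal fun c _ hc => by rw [Function.update_of_ne (by omega)]
  rw [← Bseg_mul_Bseg (by omega : a ≤ l + 1) hlb, Bseg_succ hal, Function.update_self, outer,
    inner, Matrix.mul_assoc]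

lemma Bseg_eq_mul_mul {a l b : ℕ} (hal : a ≤ l) (hlb : l < b) :
    Bseg B a b = Bseg B (l + 1) b * B l * Bseg B a l := by
  simpa using Bseg_update (B := B) hal hlb (B l)

end Bseg

section EntrywiseDeriv

def HasEntrywiseDerivWithinAt {α β : Type*} (F : ℝ → Matrix α β ℝ) (F' : Matrix α β ℝ)
    (s : Set ℝ) (t : ℝ) : Prop :=
  ∀ i j, HasDerivWithinAt (fun u => F u i j) (F' i j) s t

variable {α β γ : Type*} {s : Set ℝ} {t : ℝ}

lemma hasEntrywiseDerivWithinAt_const (A : Matrix α β ℝ) :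
    HasEntrywiseDerivWithinAt (fun _ => A) 0 s t :=
  fun _ _ => hasDerivWithinAt_const t s _

lemma HasEntrywiseDerivWithinAt.mul [Fintype β] {F : ℝ → Matrix α β ℝ} {G : ℝ → Matrix β γ ℝ}
    {F' : Matrix α β ℝ} {G' : Matrix β γ ℝ} (hF : HasEntrywiseDerivWithinAt F F' s t)
    (hG : HasEntrywiseDerivWithinAt G G' s t) :
    HasEntrywiseDerivWithinAt (fun u => F u * G u) (F' * G t + F t * G') s t := by
  intro i j
  simp only [Matrix.add_apply, Matrix.mul_apply, ← Finset.sum_add_distrib]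
  exact HasDerivWithinAt.fun_sum fun k _ => (hF i k).mul (hG k j)

lemma hasEntrywiseDerivWithinAt_Bseg {m : ℕ → ℕ}
    {Bt : ℝ → ∀ l : ℕ, Matrix (Fin (m (l + 1))) (Fin (m l)) ℝ}
    {B' : ∀ l : ℕ, Matrix (Fin (m (l + 1))) (Fin (m l)) ℝ} {a b : ℕ} (hab : a ≤ b)
    (hB : ∀ l, a ≤ l → l < b → HasEntrywiseDerivWithinAt (fun u => Bt u l) (B' l) s t) :
    HasEntrywiseDerivWithinAt (fun u => Bseg (Bt u) a b)
      (∑ l ∈ Finset.Ico a b, Bseg (Bt t) (l + 1) b * B' l * Bseg (Bt t) a l) s t := by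
  induction b, hab using Nat.le_induction with
  | base => simpa using hasEntrywiseDerivWithinAt_const (1 : Matrix (Fin (m a)) (Fin (m a)) ℝ)
  | succ b hab ih =>
    have key := (hB b hab (by omega)).mul (ih fun l hal hlb => hB l hal (by omega))
    simp only [← Bseg_succ hab] at key
    convert key using 1
    rw [Finset.sum_Ico_succ_top hab, Bseg_self, Matrix.one_mul, Matrix.mul_sum,
      add_comm (B' b * _)]
    congr 1
    refine Finset.sum_congr rfl fun l hl => ?_
    rw [Bseg_succ (Finset.mem_Ico.mp hl).2]
    simp only [Matrix.mul_assoc]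

end EntrywiseDeriv

section Gradient

/-- The paper's `∇_{(H)}L(W, B)`. -/
def gnnLossGrad {n nb my : ℕ} {m : ℕ → ℕ} (H : ℕ)
    (X : Matrix (Fin (m 0)) (Fin n) ℝ) (S : Matrix (Fin n) (Fin n) ℝ)
    (ι : Fin nb → Fin n) (Y : Matrix (Fin my) (Fin nb) ℝ)
    (W : Matrix (Fin my) (Fin (m H)) ℝ)
    (B : ∀ l : ℕ, Matrix (Fin (m (l + 1))) (Fin (m l)) ℝ) : Matrix (Fin my) (Fin (m 0)) ℝ :=
  ((2 : ℝ) • (W * Bseg B 0 H * X * (S ^ H).submatrix id ι - Y)) * (X * (S ^ H).submatrix id ι)ᵀ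

lemma hasDerivAt_frobSq_add_smul {α β : Type*} [Fintype α] [Fintype β] (R E : Matrix α β ℝ) :
    HasDerivAt (fun s : ℝ => frobSq (R + s • E)) (∑ p, ∑ q, 2 * R p q * E p q) 0 := by
  unfold frobSq
  refine HasDerivAt.fun_sum fun p _ => HasDerivAt.fun_sum fun q _ => ?_
  have h : HasDerivAt (fun s : ℝ => R p q + s * E p q) (E p q) 0 := by
    simpa using (hasDerivAt_mul_const (E p q)).const_add (R p q)
  simpa [mul_comm, mul_left_comm] using h.fun_pow 2

lemma entryDeriv_frobSq_mul_sub {a b c d : ℕ} (A : Matrix (Fin c) (Fin a) ℝ)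
    (C : Matrix (Fin b) (Fin d) ℝ) (Y : Matrix (Fin c) (Fin d) ℝ) (M : Matrix (Fin a) (Fin b) ℝ) :
    entryDeriv (fun M' => frobSq (A * M' * C - Y)) M = (2 : ℝ) • (Aᵀ * (A * M * C - Y) * Cᵀ) := by
  ext i j
  have hline : ∀ s : ℝ, A * (M + s • Matrix.single i j (1 : ℝ)) * C - Y
      = (A * M * C - Y) + s • (A * Matrix.single i j (1 : ℝ) * C) := by
    intro s
    rw [Matrix.mul_add, Matrix.add_mul, Matrix.mul_smul, Matrix.smul_mul, add_sub_right_comm]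
  have hdir : ∀ p q, (A * Matrix.single i j (1 : ℝ) * C) p q = A p i * C j q := by
    intro p q
    simp [Matrix.mul_apply, Matrix.single_apply, ite_and]
  simp only [entryDeriv, Matrix.of_apply, hline,
    (hasDerivAt_frobSq_add_smul (A * M * C - Y) (A * Matrix.single i j (1 : ℝ) * C)).deriv, hdir,
    Matrix.smul_apply, smul_eq_mul, Matrix.mul_apply, Matrix.transpose_apply, Finset.mul_sum,
    Finset.sum_mul]
  rw [Finset.sum_comm]
  exact Finset.sum_congr rfl fun _ _ => Finset.sum_congr rfl fun _ _ => by ring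

variable {n nb my H : ℕ} {m : ℕ → ℕ} (X : Matrix (Fin (m 0)) (Fin n) ℝ)
  (S : Matrix (Fin n) (Fin n) ℝ) (ι : Fin nb → Fin n) (Y : Matrix (Fin my) (Fin nb) ℝ)
  (W : Matrix (Fin my) (Fin (m H)) ℝ) (B : ∀ l : ℕ, Matrix (Fin (m (l + 1))) (Fin (m l)) ℝ)

lemma entryDeriv_gnnLoss_weight :
    entryDeriv (fun W' => gnnLoss H X S ι Y W' B) W
      = gnnLossGrad H X S ι Y W B * (Bseg B 0 H)ᵀ := by
  have hloss : (fun W' => gnnLoss H X S ι Y W' B) = fun W' => frobSq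
      ((1 : Matrix (Fin my) (Fin my) ℝ) * W' * (Bseg B 0 H * X * (S ^ H).submatrix id ι) - Y) := by
    funext W'
    simp only [gnnLoss, Matrix.one_mul, Matrix.mul_assoc]
  rw [hloss, entryDeriv_frobSq_mul_sub, gnnLossGrad]
  simp only [Matrix.transpose_one, Matrix.one_mul, Matrix.transpose_mul, Matrix.smul_mul,
    Matrix.mul_assoc]

lemma entryDeriv_gnnLoss_layer {l : ℕ} (hl : l < H) :
    entryDeriv (fun M => gnnLoss H X S ι Y W (Function.update B l M)) (B l)
      = (W * Bseg B (l + 1) H)ᵀ * gnnLossGrad H X S ι Y W B * (Bseg B 0 l)ᵀ := by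
  have hloss : (fun M => gnnLoss H X S ι Y W (Function.update B l M)) = fun M =>
      frobSq (W * Bseg B (l + 1) H * M * (Bseg B 0 l * X * (S ^ H).submatrix id ι) - Y) := by
    funext M
    simp only [gnnLoss, Bseg_update (Nat.zero_le l) hl, Matrix.mul_assoc]
  rw [hloss, entryDeriv_frobSq_mul_sub, gnnLossGrad, Bseg_eq_mul_mul (Nat.zero_le l) hl]
  simp only [Matrix.transpose_mul, Matrix.smul_mul, Matrix.mul_smul, Matrix.mul_assoc]

end Gradient

lemma kronecker_transpose_mul_self_mulVec_vec {R k l n p : Type*} [CommRing R] [Fintype k]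
    [Fintype l] [Fintype n] [Fintype p] (A : Matrix k l R) (C : Matrix n p R) (G : Matrix p l R) :
    ((A ⊗ₖ C)ᵀ * (A ⊗ₖ C)) *ᵥ G.vec = (Cᵀ * C * G * (Aᵀ * A)).vec := by
  rw [← Matrix.kroneckerMap_transpose, ← Matrix.mul_kronecker_mul, Matrix.kronecker_mulVec_vec,
    Matrix.transpose_mul, Matrix.transpose_transpose]

/-- The product rule for `Z = W B̄^{(1:H)}`, with the gradient-flow velocities substituted. -/
lemma vec_endToEnd_velocity {my H : ℕ} {m : ℕ → ℕ} (W : Matrix (Fin my) (Fin (m H)) ℝ)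
    (B : ∀ l : ℕ, Matrix (Fin (m (l + 1))) (Fin (m l)) ℝ) (G : Matrix (Fin my) (Fin (m 0)) ℝ) :
    (-(G * (Bseg B 0 H)ᵀ) * Bseg B 0 H + W * ∑ l ∈ Finset.Ico 0 H,
        Bseg B (l + 1) H * -((W * Bseg B (l + 1) H)ᵀ * G * (Bseg B 0 l)ᵀ) * Bseg B 0 l).vec
      = -((((Bseg B 0 H)ᵀ * Bseg B 0 H) ⊗ₖ (1 : Matrix (Fin my) (Fin my) ℝ) +
          ∑ l ∈ Finset.range H, (Bseg B 0 l ⊗ₖ (W * Bseg B (l + 1) H)ᵀ)ᵀ *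
            (Bseg B 0 l ⊗ₖ (W * Bseg B (l + 1) H)ᵀ)) *ᵥ G.vec) := by
  simp only [Matrix.add_mulVec, Matrix.sum_mulVec, kronecker_transpose_mul_self_mulVec_vec,
    Matrix.kronecker_mulVec_vec, ← Matrix.vec_sum, ← Matrix.vec_add, ← Matrix.vec_neg,
    ← Finset.range_eq_Ico, Matrix.mul_sum, Matrix.transpose_transpose]
  congr 1
  simp only [Matrix.transpose_mul, Matrix.transpose_transpose, Matrix.one_mul, Matrix.neg_mul,
    Matrix.mul_neg, Matrix.mul_assoc, Finset.sum_neg_distrib, neg_add]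

/-- The paper's sum over `i ∈ {1,…,H}` is written over `i ∈ range H`, with paper-`i` equal to
`i+1`. -/
theorem stmt15_general {n nb my H : ℕ} {m : ℕ → ℕ}
    (X : Matrix (Fin (m 0)) (Fin n) ℝ) (S : Matrix (Fin n) (Fin n) ℝ)
    (ι : Fin nb → Fin n)
    (Y : Matrix (Fin my) (Fin nb) ℝ)
    (Wt : ℝ → Matrix (Fin my) (Fin (m H)) ℝ)
    (Bt : ℝ → ∀ l : ℕ, Matrix (Fin (m (l + 1))) (Fin (m l)) ℝ)
    (hW : ∀ t ∈ Set.Ici (0 : ℝ), ∀ i j,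
      HasDerivWithinAt (fun s => Wt s i j)
        (-(entryDeriv (fun W' => gnnLoss H X S ι Y W' (Bt t)) (Wt t)) i j) (Set.Ici 0) t)
    (hB : ∀ t ∈ Set.Ici (0 : ℝ), ∀ l < H, ∀ i j,
      HasDerivWithinAt (fun s => Bt s l i j)
        (-(entryDeriv
            (fun M : Matrix (Fin (m (l + 1))) (Fin (m l)) ℝ =>
              gnnLoss H X S ι Y (Wt t) (Function.update (Bt t) l M)) (Bt t l)) i j)
        (Set.Ici 0) t) :
    ∀ t ∈ Set.Ici (0 : ℝ),
      ∀ grad : Matrix (Fin my) (Fin (m 0)) ℝ,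
      grad = ((2 : ℝ) • (Wt t * Bseg (Bt t) 0 H * X * (S ^ H).submatrix id ι - Y)) *
        (X * (S ^ H).submatrix id ι)ᵀ →
      ∀ p : Fin (m 0) × Fin my,
        HasDerivWithinAt (fun s => vecM (Wt s * Bseg (Bt s) 0 H) p)
          (-(((((Bseg (Bt t) 0 H)ᵀ * Bseg (Bt t) 0 H) ⊗ₖ
                (1 : Matrix (Fin my) (Fin my) ℝ)) +
              ∑ i ∈ Finset.range H,
                (Bseg (Bt t) 0 i ⊗ₖ (Wt t * Bseg (Bt t) (i + 1) H)ᵀ)ᵀ *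
                  (Bseg (Bt t) 0 i ⊗ₖ (Wt t * Bseg (Bt t) (i + 1) H)ᵀ)).mulVec
            (vecM grad)) p)
          (Set.Ici 0) t := by
  rintro t ht _ rfl p
  set G := gnnLossGrad H X S ι Y (Wt t) (Bt t)
  have hWt : HasEntrywiseDerivWithinAt Wt (-(G * (Bseg (Bt t) 0 H)ᵀ)) (Set.Ici 0) t := by
    intro i j
    have h := hW t ht i j
    rwa [entryDeriv_gnnLoss_weight] at h
  have hBt : ∀ l, 0 ≤ l → l < H → HasEntrywiseDerivWithinAt (fun u => Bt u l)
      (-((Wt t * Bseg (Bt t) (l + 1) H)ᵀ * G * (Bseg (Bt t) 0 l)ᵀ)) (Set.Ici 0) t := by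
    intro l _ hl i j
    have h := hB t ht l hl i j
    rwa [entryDeriv_gnnLoss_layer _ _ _ _ _ _ hl] at h
  have hZ := hWt.mul (hasEntrywiseDerivWithinAt_Bseg (Nat.zero_le H) hBt) p.2 p.1
  exact hZ.congr_deriv (congrFun (vec_endToEnd_velocity (Wt t) (Bt t) G) p)

/-- induced gradient dynamics of the end-to-end matrix
`Z_{(H),t} = W_t B_{(H),t}⋯B_{(1),t}`:
`d/dt vec(Z) = −(F_{(H),t} + Σ_{i=1}^H J_{(i,H),t}ᵀ J_{(i,H),t}) vec(∇_{(H)}L)`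
(stated entrywise; the paper's sum over `i ∈ {1,…,H}` is written over `i ∈ range H`,
with paper-`i` equal to `i+1`). -/
theorem stmt15 {n nb my H : ℕ} {m : ℕ → ℕ}
    (X : Matrix (Fin (m 0)) (Fin n) ℝ) (S : Matrix (Fin n) (Fin n) ℝ)
    (ι : Fin nb → Fin n) (hι : Function.Injective ι)
    (Y : Matrix (Fin my) (Fin nb) ℝ)
    (Wt : ℝ → Matrix (Fin my) (Fin (m H)) ℝ)
    (Bt : ℝ → ∀ l : ℕ, Matrix (Fin (m (l + 1))) (Fin (m l)) ℝ)
    (hW : ∀ t ∈ Set.Ici (0 : ℝ), ∀ i j,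
      HasDerivWithinAt (fun s => Wt s i j)
        (-(entryDeriv (fun W' => gnnLoss H X S ι Y W' (Bt t)) (Wt t)) i j) (Set.Ici 0) t)
    (hB : ∀ t ∈ Set.Ici (0 : ℝ), ∀ l < H, ∀ i j,
      HasDerivWithinAt (fun s => Bt s l i j)
        (-(entryDeriv
            (fun M : Matrix (Fin (m (l + 1))) (Fin (m l)) ℝ =>
              gnnLoss H X S ι Y (Wt t) (Function.update (Bt t) l M)) (Bt t l)) i j)
        (Set.Ici 0) t) :
    ∀ t ∈ Set.Ici (0 : ℝ),
      ∀ grad : Matrix (Fin my) (Fin (m 0)) ℝ,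
      grad = ((2 : ℝ) • (Wt t * Bseg (Bt t) 0 H * X * (S ^ H).submatrix id ι - Y)) *
        (X * (S ^ H).submatrix id ι)ᵀ →
      ∀ p : Fin (m 0) × Fin my,
        HasDerivWithinAt (fun s => vecM (Wt s * Bseg (Bt s) 0 H) p)
          (-(((((Bseg (Bt t) 0 H)ᵀ * Bseg (Bt t) 0 H) ⊗ₖ
                (1 : Matrix (Fin my) (Fin my) ℝ)) +
              ∑ i ∈ Finset.range H,
                (Bseg (Bt t) 0 i ⊗ₖ (Wt t * Bseg (Bt t) (i + 1) H)ᵀ)ᵀ *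
                  (Bseg (Bt t) 0 i ⊗ₖ (Wt t * Bseg (Bt t) (i + 1) H)ᵀ)).mulVec
            (vecM grad)) p)
          (Set.Ici 0) t :=
  stmt15_general X S ι Y Wt Bt hW hB

end
end
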